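/- arXiv:1411.0426 — 3 statements merged into one kernel-verified Lean document; each statement's English description precedes it below -/
import Mathlib

section
/- Let u be a concave, law-determined monetary utility function on L^∞ of an atomless probability space, satisfying the Fatou property. Then for all real numbers x < y, the map λ ↦ u(λδ_x + (1−λ)δ_y) is continuous at every λ ∈ (0,1]; in particular lim_{λ→1^-} u(λδ_x + (1−λ)δ_y) = x. -/
open MeasureTheory Filter Set

/-- A (representative of an) element of `L^∞`: a measurable, essentially bounded function. -/
def BddMeas {Ω : Type} [MeasurableSpace Ω] (P : Measure Ω) (ξ : Ω → ℝ) : Prop :=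
  Measurable ξ ∧ ∃ C : ℝ, ∀ᵐ ω ∂P, |ξ ω| ≤ C

/-- `ξ` has the two-point law `l·δ_x + (1-l)·δ_y`. -/
def HasDyadicLaw {Ω : Type} [MeasurableSpace Ω] (P : Measure Ω) (ξ : Ω → ℝ)
    (x y l : ℝ) : Prop :=
  P.map ξ = ENNReal.ofReal l • Measure.dirac x + ENNReal.ofReal (1 - l) • Measure.dirac y

/-!
Write `v λ` for the utility of the law `λ δ_x + (1 - λ) δ_y`; it is antitone since `x < y`.
Given `0 ≤ a ≤ b` with `n (b - a) ≤ b`, put the mass `b` on a set `B` and carve out of `B` disjoint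
pieces `D₁, …, Dₙ` of mass `b - a` (Sierpiński's theorem for atomless measures). The variables equal
to `x` on `B \ Dₖ` all have the law of weight `a`, and their average exceeds the variable equal to
`x` on `B` by at most `(y - x) / n`, because the `Dₖ` are disjoint. Concavity, monotonicity and
translation invariance give `v a ≤ v b + (y - x) / n`, which together with antitonicity makes `v`
continuous at every `λ > 0`; finally `v 1 = u x = x`.
-/

open scoped ENNReal Function

theorem ENNReal.exists_mem_sSup_le_two_mul {S : Set ℝ≥0∞} (hne : S.Nonempty) (htop : sSup S ≠ ∞) :
    ∃ c ∈ S, sSup S ≤ 2 * c := by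
  rcases eq_or_ne (sSup S) 0 with h | h
  · obtain ⟨c, hc⟩ := hne
    exact ⟨c, hc, by simp [h]⟩
  · obtain ⟨c, hc, hlt⟩ := lt_sSup_iff.1 (ENNReal.half_lt_self h htop)
    refine ⟨c, hc, ?_⟩
    rw [mul_comm]
    exact (ENNReal.div_le_iff two_ne_zero ENNReal.ofNat_ne_top).1 hlt.le

theorem MeasureTheory.exists_subset_two_mul_measure_ge {Ω : Type*} [MeasurableSpace Ω]
    (μ : Measure Ω) (T : Set Ω) {s : ℝ≥0∞} (hs : s ≠ ∞) :
    ∃ C ⊆ T, MeasurableSet C ∧ μ C ≤ s ∧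
      ∀ C' ⊆ T, MeasurableSet C' → μ C' ≤ s → μ C' ≤ 2 * μ C := by
  set 𝒞 : Set (Set Ω) := {C | C ⊆ T ∧ MeasurableSet C ∧ μ C ≤ s}
  have hne : (μ '' 𝒞).Nonempty := ⟨_, mem_image_of_mem μ (show ∅ ∈ 𝒞 by simp [𝒞])⟩
  have htop : sSup (μ '' 𝒞) ≠ ∞ :=
    ne_top_of_le_ne_top hs (sSup_le (by rintro _ ⟨C, hC, rfl⟩; exact hC.2.2))
  obtain ⟨_, ⟨C, ⟨hCT, hC, hCs⟩, rfl⟩, hmax⟩ := ENNReal.exists_mem_sSup_le_two_mul hne htop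
  exact ⟨C, hCT, hC, hCs, fun C' hC'T hC' hC's =>
    (le_sSup (mem_image_of_mem μ (show C' ∈ 𝒞 from ⟨hC'T, hC', hC's⟩))).trans hmax⟩

namespace MeasureTheory.Measure

variable {Ω : Type*} [MeasurableSpace Ω]

-- Atomless in the measure-theoretic sense; Mathlib's `NoAtoms` only asks singletons to be null.
def Atomless (μ : Measure Ω) : Prop :=
  ∀ A : Set Ω, MeasurableSet A → 0 < μ A →
    ∃ B : Set Ω, B ⊆ A ∧ MeasurableSet B ∧ 0 < μ B ∧ μ B < μ A

namespace Atomless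

variable {μ : Measure Ω} {A : Set Ω}

theorem exists_subset_two_mul_measure_le (hμ : μ.Atomless) (hA : MeasurableSet A)
    (h0 : 0 < μ A) : ∃ B ⊆ A, MeasurableSet B ∧ 0 < μ B ∧ 2 * μ B ≤ μ A := by
  obtain ⟨B, hBA, hB, hB0, hBA'⟩ := hμ A hA h0
  have hsplit : μ B + μ (A \ B) = μ A := by
    rw [measure_add_sdiff hB.nullMeasurableSet, union_eq_self_of_subset_left hBA]
  rcases le_total (μ B) (μ (A \ B)) with h | h
  · exact ⟨B, hBA, hB, hB0, by rw [two_mul, ← hsplit]; gcongr⟩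
  · refine ⟨A \ B, sdiff_subset, hA.diff hB, ?_, by rw [two_mul, ← hsplit, add_comm]; gcongr⟩
    refine pos_iff_ne_zero.2 fun h0 => hBA'.ne ?_
    rw [← hsplit, h0, add_zero]

theorem exists_subset_measure_le (hμ : μ.Atomless) [IsFiniteMeasure μ] (hA : MeasurableSet A)
    (h0 : 0 < μ A) {ε : ℝ≥0∞} (hε : 0 < ε) : ∃ B ⊆ A, MeasurableSet B ∧ 0 < μ B ∧ μ B ≤ ε := by
  have halve : ∀ n : ℕ, ∃ B ⊆ A, MeasurableSet B ∧ 0 < μ B ∧ 2 ^ n * μ B ≤ μ A := by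
    intro n
    induction n with
    | zero => exact ⟨A, subset_rfl, hA, h0, by simp⟩
    | succ n ih =>
      obtain ⟨B, hBA, hB, hB0, hBn⟩ := ih
      obtain ⟨C, hCB, hC, hC0, hCB'⟩ := hμ.exists_subset_two_mul_measure_le hB hB0
      refine ⟨C, hCB.trans hBA, hC, hC0, ?_⟩
      calc 2 ^ (n + 1) * μ C = 2 ^ n * (2 * μ C) := by ring
      _ ≤ 2 ^ n * μ B := by gcongr
      _ ≤ μ A := hBn
  obtain ⟨n, hn⟩ := ENNReal.exists_nat_mul_gt hε.ne' (measure_ne_top μ A)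
  obtain ⟨B, hBA, hB, hB0, hBn⟩ := halve n
  refine ⟨B, hBA, hB, hB0, (ENNReal.mul_le_mul_iff_right (a := 2 ^ n) (by simp) (by simp)).1 ?_⟩
  calc 2 ^ n * μ B ≤ μ A := hBn
  _ ≤ n * ε := hn.le
  _ ≤ 2 ^ n * ε := by gcongr; exact_mod_cast Nat.lt_two_pow_self.le

theorem exists_subset_measure_eq (hμ : μ.Atomless) [IsFiniteMeasure μ] (hA : MeasurableSet A)
    {r : ℝ≥0∞} (hr : r ≤ μ A) : ∃ B ⊆ A, MeasurableSet B ∧ μ B = r := by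
  have hr_top : r ≠ ∞ := ne_top_of_le_ne_top (measure_ne_top μ A) hr
  choose C hCA hC hCr hCmax using fun B : Set Ω =>
    exists_subset_two_mul_measure_ge μ (A \ B) (ENNReal.sub_ne_top hr_top)
  let B : ℕ → Set Ω := fun n => (fun s => s ∪ C s)^[n] ∅
  have hB_succ : ∀ n, B (n + 1) = B n ∪ C (B n) := fun n => Function.iterate_succ_apply' _ _ _
  have hB : ∀ n, MeasurableSet (B n) ∧ B n ⊆ A ∧ μ (B n) ≤ r := by
    intro n
    induction n with
    | zero => exact ⟨.empty, empty_subset _, by simp [B]⟩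
    | succ n ih =>
      rw [hB_succ]
      refine ⟨ih.1.union (hC _), union_subset ih.2.1 ((hCA _).trans sdiff_subset), ?_⟩
      calc μ (B n ∪ C (B n)) ≤ μ (B n) + (r - μ (B n)) :=
            (measure_union_le _ _).trans (by gcongr; exact hCr _)
      _ = r := add_tsub_cancel_of_le ih.2.2
  have hB_measure_succ : ∀ n, μ (B (n + 1)) = μ (B n) + μ (C (B n)) := fun n => by
    rw [hB_succ, measure_union (disjoint_sdiff_right.mono_right (hCA _)) (hC _)]
  have hB_mono : Monotone B := monotone_nat_of_le_succ fun n => by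
    rw [hB_succ]; exact subset_union_left
  have hle : μ (⋃ n, B n) ≤ r := by
    rw [hB_mono.measure_iUnion]; exact iSup_le fun n => (hB n).2.2
  refine ⟨⋃ n, B n, iUnion_subset fun n => (hB n).2.1, .iUnion fun n => (hB n).1,
    le_antisymm hle ?_⟩
  by_contra! hlt
  -- a piece of `A` left over by the greedy choices would have been a candidate at every stage
  obtain ⟨C₀, hC₀A, hC₀, hC₀pos, hC₀r⟩ := hμ.exists_subset_measure_le
    (hA.diff (.iUnion fun n => (hB n).1))
    ((tsub_pos_of_lt (hlt.trans_le hr)).trans_le le_measure_sdiff) (tsub_pos_of_lt hlt)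
  have hgrowth : ∀ n : ℕ, n * μ C₀ ≤ 2 * μ (B n) := by
    intro n
    induction n with
    | zero => simp
    | succ n ih =>
      rw [hB_measure_succ, mul_add, Nat.cast_succ, add_mul, one_mul]
      refine add_le_add ih (hCmax _ _ (hC₀A.trans (sdiff_subset_sdiff_right (subset_iUnion B n)))
        hC₀ (hC₀r.trans (tsub_le_tsub_left (measure_mono (subset_iUnion B n)) r)))
  obtain ⟨n, hn⟩ := ENNReal.exists_nat_mul_gt hC₀pos.ne' (b := 2 * r) (by finiteness)
  exact (hn.trans_le (hgrowth n)).not_ge (by gcongr; exact (hB n).2.2)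

theorem exists_disjoint_subsets_measure_eq (hμ : μ.Atomless) [IsFiniteMeasure μ] {d : ℝ≥0∞} :
    ∀ (n : ℕ) {S : Set Ω}, MeasurableSet S → n * d ≤ μ S → ∃ D : Fin n → Set Ω,
      (∀ k, D k ⊆ S ∧ MeasurableSet (D k) ∧ μ (D k) = d) ∧ Pairwise (Disjoint on D)
  | 0, _, _, _ => ⟨Fin.elim0, fun k => k.elim0, fun k => k.elim0⟩
  | n + 1, S, hS, hd => by
    have hdS : d ≤ μ S := le_trans (by rw [Nat.cast_succ, add_mul, one_mul]; exact le_add_self) hd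
    obtain ⟨D₀, hD₀S, hD₀, hD₀d⟩ := hμ.exists_subset_measure_eq hS hdS
    have hrest : n * d ≤ μ (S \ D₀) := by
      rw [measure_sdiff hD₀S hD₀.nullMeasurableSet (measure_ne_top μ _), hD₀d]
      exact ENNReal.le_sub_of_add_le_right (ne_top_of_le_ne_top (measure_ne_top μ S) hdS)
        (by rwa [Nat.cast_succ, add_mul, one_mul] at hd)
    obtain ⟨D, hD, hdisj⟩ := exists_disjoint_subsets_measure_eq hμ n (hS.diff hD₀) hrest
    have hD₀_disj : ∀ k, Disjoint D₀ (D k) := fun k => disjoint_sdiff_right.mono_right (hD k).1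
    refine ⟨Fin.cons D₀ D, fun k => ?_, fun i j hij => ?_⟩
    · cases k using Fin.cases
      · exact ⟨hD₀S, hD₀, hD₀d⟩
      · exact ⟨(hD _).1.trans sdiff_subset, (hD _).2⟩
    · cases i using Fin.cases <;> cases j using Fin.cases
      · exact absurd rfl hij
      · exact hD₀_disj _
      · exact (hD₀_disj _).symm
      · exact hdisj fun h => hij (congrArg Fin.succ h)

end Atomless
end MeasureTheory.Measure

section TwoPoint

variable {Ω : Type*}

open scoped Classical in
noncomputable def twoPoint (S : Set Ω) (x y : ℝ) : Ω → ℝ :=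
  S.piecewise (fun _ => x) (fun _ => y)

variable {S : Set Ω} {x y : ℝ}

theorem twoPoint_of_mem {ω : Ω} (h : ω ∈ S) : twoPoint S x y ω = x := by
  classical exact piecewise_eq_of_mem _ _ _ h

theorem twoPoint_of_notMem {ω : Ω} (h : ω ∉ S) : twoPoint S x y ω = y := by
  classical exact piecewise_eq_of_notMem _ _ _ h

theorem twoPoint_univ : twoPoint (univ : Set Ω) x y = fun _ => x :=
  funext fun _ => twoPoint_of_mem (mem_univ _)

theorem twoPoint_anti {A B : Set Ω} (hAB : A ⊆ B) (hxy : x ≤ y) :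
    twoPoint B x y ≤ twoPoint A x y := by
  intro ω
  by_cases hA : ω ∈ A
  · rw [twoPoint_of_mem hA, twoPoint_of_mem (hAB hA)]
  · rw [twoPoint_of_notMem hA]
    by_cases hB : ω ∈ B
    · rw [twoPoint_of_mem hB]; exact hxy
    · rw [twoPoint_of_notMem hB]

variable [MeasurableSpace Ω] {P : Measure Ω}

theorem measurable_twoPoint (hS : MeasurableSet S) : Measurable (twoPoint S x y) := by
  classical exact measurable_const.piecewise hS measurable_const

theorem map_twoPoint (hS : MeasurableSet S) :
    P.map (twoPoint S x y) = P S • Measure.dirac x + P Sᶜ • Measure.dirac y := by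
  have hconst : ∀ T, MeasurableSet T → ∀ c, (∀ ω ∈ T, twoPoint S x y ω = c) →
      (P.restrict T).map (twoPoint S x y) = P T • Measure.dirac c := fun T hT c h => by
    rw [Measure.map_congr (g := fun _ => c) ((ae_restrict_mem hT).mono h), Measure.map_const,
      Measure.restrict_apply_univ]
  conv_lhs => rw [← Measure.restrict_add_restrict_compl (μ := P) hS]
  rw [Measure.map_add _ _ (measurable_twoPoint hS), hconst S hS x fun _ => twoPoint_of_mem,
    hconst Sᶜ hS.compl y fun _ => twoPoint_of_notMem]

end TwoPoint

section MonetaryUtility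

variable {Ω : Type} [MeasurableSpace Ω] {P : Measure Ω}

theorem bddMeas_twoPoint {S : Set Ω} (hS : MeasurableSet S) (x y : ℝ) :
    BddMeas P (twoPoint S x y) := by
  refine ⟨measurable_twoPoint hS, max |x| |y|, .of_forall fun ω => ?_⟩
  by_cases h : ω ∈ S
  · rw [twoPoint_of_mem h]; exact le_max_left _ _
  · rw [twoPoint_of_notMem h]; exact le_max_right _ _

theorem BddMeas.add_const {ξ : Ω → ℝ} (hξ : BddMeas P ξ) (h : ℝ) :
    BddMeas P fun ω => ξ ω + h := by
  obtain ⟨hm, C, hC⟩ := hξ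
  refine ⟨hm.add_const h, C + |h|, hC.mono fun ω hω => ?_⟩
  exact (abs_add_le _ _).trans (by gcongr)

theorem convex_setOf_bddMeas : Convex ℝ {ξ : Ω → ℝ | BddMeas P ξ} := by
  rintro ξ ⟨hξ, C, hC⟩ η ⟨hη, D, hD⟩ a b ha hb -
  refine ⟨(hξ.const_smul a).add (hη.const_smul b), a * C + b * D, ?_⟩
  filter_upwards [hC, hD] with ω hCω hDω
  calc |a * ξ ω + b * η ω| ≤ |a * ξ ω| + |b * η ω| := abs_add_le _ _
  _ = a * |ξ ω| + b * |η ω| := by rw [abs_mul, abs_mul, abs_of_nonneg ha, abs_of_nonneg hb]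
  _ ≤ a * C + b * D := by gcongr

theorem hasDyadicLaw_twoPoint [IsProbabilityMeasure P] {S : Set Ω} (hS : MeasurableSet S)
    {x y l : ℝ} (hl : 0 ≤ l) (hPS : P S = ENNReal.ofReal l) : HasDyadicLaw P (twoPoint S x y) x y l := by
  rw [HasDyadicLaw, map_twoPoint hS, prob_compl_eq_one_sub hS, hPS, ENNReal.ofReal_sub _ hl,
    ENNReal.ofReal_one]

structure IsMonetaryUtility (P : Measure Ω) (u : (Ω → ℝ) → ℝ) : Prop where
  add_const : ∀ ξ : Ω → ℝ, BddMeas P ξ → ∀ h : ℝ, u (fun ω => ξ ω + h) = u ξ + h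
  mono : ∀ ξ η : Ω → ℝ, BddMeas P ξ → BddMeas P η → (∀ᵐ ω ∂P, ξ ω ≤ η ω) → u ξ ≤ u η
  map_zero : u (fun _ => 0) = 0

def IsLawInvariant (P : Measure Ω) (u : (Ω → ℝ) → ℝ) : Prop :=
  ∀ ξ η : Ω → ℝ, BddMeas P ξ → BddMeas P η → P.map ξ = P.map η → u ξ = u η

namespace IsMonetaryUtility

variable {u : (Ω → ℝ) → ℝ}

theorem map_const (hu : IsMonetaryUtility P u) (c : ℝ) : u (fun _ => c) = c := by
  simpa [hu.map_zero] using
    hu.add_const (fun _ => 0) ⟨measurable_const, 0, .of_forall fun _ => by simp⟩ c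

theorem twoPoint_le_add_div [IsProbabilityMeasure P] (hu : IsMonetaryUtility P u)
    (hconc : ConcaveOn ℝ {ξ | BddMeas P ξ} u) (hlaw : IsLawInvariant P u) {x y : ℝ} (hxy : x ≤ y)
    {A B : Set Ω} (hA : MeasurableSet A) (hB : MeasurableSet B) {n : ℕ} (hn : 0 < n)
    {D : Fin n → Set Ω} (hD : ∀ k, D k ⊆ B ∧ MeasurableSet (D k) ∧ P (B \ D k) = P A)
    (hdisj : Pairwise (Disjoint on D)) :
    u (twoPoint A x y) ≤ u (twoPoint B x y) + (y - x) / n := by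
  set ζ : Fin n → Ω → ℝ := fun k => twoPoint (B \ D k) x y
  have hζ_bdd : ∀ k, BddMeas P (ζ k) := fun k => bddMeas_twoPoint (hB.diff (hD k).2.1) x y
  have hζ_law : ∀ k, u (ζ k) = u (twoPoint A x y) := fun k =>
    hlaw _ _ (hζ_bdd k) (bddMeas_twoPoint hA x y) (by
      rw [map_twoPoint (hB.diff (hD k).2.1), map_twoPoint hA, prob_compl_eq_one_sub hA,
        prob_compl_eq_one_sub (hB.diff (hD k).2.1), (hD k).2.2])
  have hζ_eq : ∀ k ω, ζ k ω = twoPoint B x y ω + (y - x) * (D k).indicator 1 ω := by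
    intro k ω
    by_cases hDω : ω ∈ D k
    · simp [ζ, twoPoint_of_notMem (fun h : ω ∈ B \ D k => h.2 hDω),
        twoPoint_of_mem ((hD k).1 hDω), hDω]
    · by_cases hBω : ω ∈ B
      · simp [ζ, twoPoint_of_mem (show ω ∈ B \ D k from ⟨hBω, hDω⟩), twoPoint_of_mem hBω, hDω]
      · simp [ζ, twoPoint_of_notMem (fun h : ω ∈ B \ D k => hBω h.1), twoPoint_of_notMem hBω, hDω]
  have hn' : (0 : ℝ) < n := Nat.cast_pos.2 hn
  have hweights : ∑ _k : Fin n, (n : ℝ)⁻¹ = 1 := by simp [hn'.ne']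
  have havg_le : ∀ ω, (∑ k, (n : ℝ)⁻¹ • ζ k) ω ≤ twoPoint B x y ω + (y - x) / n := by
    intro ω
    have hcover : ∑ k, (D k).indicator (1 : Ω → ℝ) ω ≤ 1 := by
      rw [← Finset.indicator_biUnion_apply _ _ (hdisj.set_pairwise _)]
      exact indicator_le_self' (fun _ _ => zero_le_one) ω
    calc (∑ k, (n : ℝ)⁻¹ • ζ k) ω
        = twoPoint B x y ω + (y - x) / n * ∑ k, (D k).indicator (1 : Ω → ℝ) ω := by
          simp only [Finset.sum_apply, Pi.smul_apply, smul_eq_mul, hζ_eq, mul_add,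
            Finset.sum_add_distrib, ← Finset.mul_sum, Finset.sum_const, Finset.card_univ,
            Fintype.card_fin, nsmul_eq_mul]
          field_simp
      _ ≤ twoPoint B x y ω + (y - x) / n * 1 := by gcongr
      _ = _ := by rw [mul_one]
  calc u (twoPoint A x y) = ∑ k, (n : ℝ)⁻¹ • u (ζ k) := by
        simp only [hζ_law]; rw [← Finset.sum_smul, hweights, one_smul]
  _ ≤ u (∑ k, (n : ℝ)⁻¹ • ζ k) :=
    hconc.le_map_sum (fun _ _ => by positivity) hweights fun k _ => hζ_bdd k
  _ ≤ u (fun ω => twoPoint B x y ω + (y - x) / n) :=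
    hu.mono _ _ (convex_setOf_bddMeas.sum_mem (fun _ _ => by positivity) hweights
      fun k _ => hζ_bdd k) ((bddMeas_twoPoint hB x y).add_const _) (.of_forall havg_le)
  _ = u (twoPoint B x y) + (y - x) / n := hu.add_const _ (bddMeas_twoPoint hB x y) _

end IsMonetaryUtility

end MonetaryUtility

theorem continuousWithinAt_of_antitoneOn_of_le_add_div {v : ℝ → ℝ} {c : ℝ}
    (hanti : AntitoneOn v (Icc 0 1))
    (hgap : ∀ a b : ℝ, 0 ≤ a → a ≤ b → b ≤ 1 → ∀ n : ℕ, 0 < n → n * (b - a) ≤ b →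
      v a ≤ v b + c / n)
    {l : ℝ} (hl : 0 < l) (hl1 : l ≤ 1) : ContinuousWithinAt v (Icc 0 1) l := by
  rw [Metric.continuousWithinAt_iff]
  intro ε hε
  obtain ⟨n, hn⟩ := exists_nat_gt (c / ε)
  have hn0 : (0 : ℝ) < n + 1 := by positivity
  have hcε : c / (n + 1 : ℕ) < ε := by
    rw [Nat.cast_succ, div_lt_iff₀ hn0, ← div_lt_iff₀' hε]; linarith
  refine ⟨l / (n + 1), by positivity, fun {t} ht hdist => ?_⟩
  have hclose : ((n + 1 : ℕ) : ℝ) * |t - l| ≤ l := by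
    rw [Real.dist_eq, lt_div_iff₀ hn0] at hdist
    push_cast; linarith
  rw [Real.dist_eq, abs_sub_lt_iff]
  rcases le_total t l with htl | hlt
  · have h1 := hgap t l ht.1 htl hl1 (n + 1) n.succ_pos
      (by rwa [abs_sub_comm, abs_of_nonneg (sub_nonneg.2 htl)] at hclose)
    have h2 := hanti ht ⟨hl.le, hl1⟩ htl
    constructor <;> linarith
  · rw [abs_of_nonneg (sub_nonneg.2 hlt)] at hclose
    have h1 := hgap l t hl.le hlt ht.2 (n + 1) n.succ_pos (hclose.trans hlt)
    have h2 := hanti ⟨hl.le, hl1⟩ ht hlt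
    constructor <;> linarith

namespace IsMonetaryUtility

variable {Ω : Type} [MeasurableSpace Ω] {P : Measure Ω} [IsProbabilityMeasure P]
  {u : (Ω → ℝ) → ℝ} {x y : ℝ} {v : ℝ → ℝ}

theorem antitoneOn_of_eq_twoPoint (hu : IsMonetaryUtility P u) (hP : P.Atomless) (hxy : x ≤ y)
    (hv : ∀ l ∈ Icc (0 : ℝ) 1, ∀ S, MeasurableSet S → P S = ENNReal.ofReal l →
      v l = u (twoPoint S x y)) :
    AntitoneOn v (Icc 0 1) := by
  intro a ha b hb hab
  obtain ⟨B, -, hB, hPB⟩ := hP.exists_subset_measure_eq .univ (r := ENNReal.ofReal b)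
    (by simpa using hb.2)
  obtain ⟨A, hAB, hA, hPA⟩ := hP.exists_subset_measure_eq hB (r := ENNReal.ofReal a)
    (by rw [hPB]; exact ENNReal.ofReal_le_ofReal hab)
  rw [hv a ha A hA hPA, hv b hb B hB hPB]
  exact hu.mono _ _ (bddMeas_twoPoint hB x y) (bddMeas_twoPoint hA x y)
    (.of_forall (twoPoint_anti hAB hxy))

theorem le_add_div_of_eq_twoPoint (hu : IsMonetaryUtility P u) (hP : P.Atomless)
    (hconc : ConcaveOn ℝ {ξ | BddMeas P ξ} u) (hlaw : IsLawInvariant P u) (hxy : x ≤ y)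
    (hv : ∀ l ∈ Icc (0 : ℝ) 1, ∀ S, MeasurableSet S → P S = ENNReal.ofReal l →
      v l = u (twoPoint S x y))
    {a b : ℝ} (ha : 0 ≤ a) (hab : a ≤ b) (hb : b ≤ 1) {n : ℕ} (hn : 0 < n)
    (hnb : n * (b - a) ≤ b) : v a ≤ v b + (y - x) / n := by
  obtain ⟨B, -, hB, hPB⟩ := hP.exists_subset_measure_eq .univ (r := ENNReal.ofReal b)
    (by simpa using hb)
  obtain ⟨A, -, hA, hPA⟩ := hP.exists_subset_measure_eq .univ (r := ENNReal.ofReal a)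
    (by simpa using hab.trans hb)
  obtain ⟨D, hD, hdisj⟩ := hP.exists_disjoint_subsets_measure_eq (d := ENNReal.ofReal (b - a)) n hB
    (by rw [hPB, ← ENNReal.ofReal_natCast, ← ENNReal.ofReal_mul n.cast_nonneg]
        exact ENNReal.ofReal_le_ofReal hnb)
  rw [hv a ⟨ha, hab.trans hb⟩ A hA hPA, hv b ⟨ha.trans hab, hb⟩ B hB hPB]
  refine hu.twoPoint_le_add_div hconc hlaw hxy hA hB hn (fun k => ⟨(hD k).1, (hD k).2.1, ?_⟩) hdisj
  rw [measure_sdiff (hD k).1 (hD k).2.1.nullMeasurableSet (measure_ne_top _ _), hPB, (hD k).2.2,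
    hPA, ← ENNReal.ofReal_sub _ (sub_nonneg.2 hab), sub_sub_cancel]

end IsMonetaryUtility

theorem stmt_0_general {Ω : Type} [MeasurableSpace Ω] (P : Measure Ω) [IsProbabilityMeasure P]
    (hAtomless : ∀ A : Set Ω, MeasurableSet A → 0 < P A →
      ∃ B : Set Ω, B ⊆ A ∧ MeasurableSet B ∧ 0 < P B ∧ P B < P A)
    (u : (Ω → ℝ) → ℝ)
    (hTI : ∀ ξ : Ω → ℝ, BddMeas P ξ → ∀ h : ℝ, u (fun ω => ξ ω + h) = u ξ + h)
    (hMono : ∀ ξ η : Ω → ℝ, BddMeas P ξ → BddMeas P η → (∀ᵐ ω ∂P, ξ ω ≤ η ω) → u ξ ≤ u η)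
    (hNorm : u (fun _ => 0) = 0)
    (hLaw : ∀ ξ η : Ω → ℝ, BddMeas P ξ → BddMeas P η → P.map ξ = P.map η → u ξ = u η)
    (hConc : ∀ ξ η : Ω → ℝ, BddMeas P ξ → BddMeas P η → ∀ l : ℝ, 0 ≤ l → l ≤ 1 →
      l * u ξ + (1 - l) * u η ≤ u (fun ω => l * ξ ω + (1 - l) * η ω))
    (x y : ℝ) (hxy : x < y) (v : ℝ → ℝ)
    (hv : ∀ l : ℝ, 0 ≤ l → l ≤ 1 →
      ∃ ξ : Ω → ℝ, BddMeas P ξ ∧ HasDyadicLaw P ξ x y l ∧ v l = u ξ) :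
    (∀ l : ℝ, 0 < l → l ≤ 1 → ContinuousWithinAt v (Set.Icc 0 1) l) ∧
      Tendsto v (nhdsWithin 1 (Set.Iio 1)) (nhds x) := by
  have hu : IsMonetaryUtility P u := ⟨hTI, hMono, hNorm⟩
  have hconc : ConcaveOn ℝ {ξ | BddMeas P ξ} u := by
    refine ⟨convex_setOf_bddMeas, fun ξ hξ η hη a b ha hb hab => ?_⟩
    obtain rfl : b = 1 - a := eq_sub_of_add_eq' hab
    exact hConc ξ η hξ hη a ha (by linarith)
  have hv_eq : ∀ l ∈ Icc (0 : ℝ) 1, ∀ S, MeasurableSet S → P S = ENNReal.ofReal l →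
      v l = u (twoPoint S x y) := fun l hl S hS hPS => by
    obtain ⟨ξ, hξ, hξlaw, hvξ⟩ := hv l hl.1 hl.2
    exact hvξ.trans <| hLaw _ _ hξ (bddMeas_twoPoint hS x y)
      (hξlaw.trans (hasDyadicLaw_twoPoint hS hl.1 hPS).symm)
  have hcont : ∀ l : ℝ, 0 < l → l ≤ 1 → ContinuousWithinAt v (Icc 0 1) l :=
    fun l => continuousWithinAt_of_antitoneOn_of_le_add_div
      (hu.antitoneOn_of_eq_twoPoint hAtomless hxy.le hv_eq)
      fun a b ha hab hb n hn hnb =>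
        hu.le_add_div_of_eq_twoPoint hAtomless hconc hLaw hxy.le hv_eq ha hab hb hn hnb
  refine ⟨hcont, ?_⟩
  have hv_one : v 1 = x := by
    rw [hv_eq 1 ⟨zero_le_one, le_rfl⟩ univ .univ (by simp), twoPoint_univ, hu.map_const]
  have hleft : ContinuousWithinAt v (Iio 1) 1 := (hcont 1 one_pos le_rfl).mono_of_mem_nhdsWithin
    (mem_of_superset (Ioo_mem_nhdsLT zero_lt_one) Ioo_subset_Icc_self)
  rwa [ContinuousWithinAt, hv_one] at hleft

theorem stmt_0 {Ω : Type} [MeasurableSpace Ω] (P : Measure Ω) [IsProbabilityMeasure P]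
    (hAtomless : ∀ A : Set Ω, MeasurableSet A → 0 < P A →
      ∃ B : Set Ω, B ⊆ A ∧ MeasurableSet B ∧ 0 < P B ∧ P B < P A)
    (u : (Ω → ℝ) → ℝ)
    (hTI : ∀ ξ : Ω → ℝ, BddMeas P ξ → ∀ h : ℝ, u (fun ω => ξ ω + h) = u ξ + h)
    (hMono : ∀ ξ η : Ω → ℝ, BddMeas P ξ → BddMeas P η → (∀ᵐ ω ∂P, ξ ω ≤ η ω) → u ξ ≤ u η)
    (hNorm : u (fun _ => 0) = 0)
    (hLaw : ∀ ξ η : Ω → ℝ, BddMeas P ξ → BddMeas P η → P.map ξ = P.map η → u ξ = u η)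
    (hConc : ∀ ξ η : Ω → ℝ, BddMeas P ξ → BddMeas P η → ∀ l : ℝ, 0 ≤ l → l ≤ 1 →
      l * u ξ + (1 - l) * u η ≤ u (fun ω => l * ξ ω + (1 - l) * η ω))
    (hFatou : ∀ (ξs : ℕ → Ω → ℝ) (ξ : Ω → ℝ), (∀ n, BddMeas P (ξs n)) → BddMeas P ξ →
      (∃ C : ℝ, ∀ n, ∀ᵐ ω ∂P, |ξs n ω| ≤ C) →
      TendstoInMeasure P ξs Filter.atTop ξ →
      Filter.limsup (fun n => u (ξs n)) Filter.atTop ≤ u ξ)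
    (x y : ℝ) (hxy : x < y) (v : ℝ → ℝ)
    (hv : ∀ l : ℝ, 0 ≤ l → l ≤ 1 →
      ∃ ξ : Ω → ℝ, BddMeas P ξ ∧ HasDyadicLaw P ξ x y l ∧ v l = u ξ) :
    (∀ l : ℝ, 0 < l → l ≤ 1 → ContinuousWithinAt v (Set.Icc 0 1) l) ∧
      Tendsto v (nhdsWithin 1 (Set.Iio 1)) (nhds x) :=
  stmt_0_general P hAtomless u hTI hMono hNorm hLaw hConc x y hxy v hv
end

section
/- Let u be a concave, law-determined monetary utility function on L^∞ of an atomless probability space, satisfying the Fatou property. Suppose there exist a > 0 and a sequence k_n < 0 with k_n ↑ 0 such that for every n and every α ∈ (0,1) one has u(α δ_{k_n} + (1−α) δ_a) < 0. Then u(ξ) = ess inf ξ for every ξ ∈ L^∞. -/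
open MeasureTheory Filter Set

/-- The essential infimum of `ξ` with respect to `P`. -/
noncomputable def essInfR {Ω : Type} [MeasurableSpace Ω] (P : Measure Ω) (ξ : Ω → ℝ) : ℝ :=
  sSup {c : ℝ | ∀ᵐ ω ∂P, c ≤ ξ ω}

/-!
Since `u` is monetary, `ess inf ξ ≤ u ξ` always. For the reverse inequality it suffices that
`u(x·1_A + y·1_{Aᶜ}) < 0` whenever `x < 0` and `P A > 0`: for `c' < c` just above `ess inf ξ`,
`ξ` is dominated by `c'` on `A = {ξ < c'}` (which is not null) and by `‖ξ‖_∞` off `A`, so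
`u ξ < c`. For two-valued variables this negativity follows from the hypothesis: scaling by
`μ = a / max a y` and concavity (with `u 0 = 0`) reduce to the values `μx` and `a`, then
`μx < k n` for large `n`, and by law determination `u(k n·1_A + a·1_{Aᶜ}) < 0` is the
hypothesis with `α = P A` (if `P A = 1` the variable is simply `x` a.s.).
-/

section

open scoped Classical

variable {Ω : Type} [MeasurableSpace Ω] {P : Measure Ω}

structure IsMonetaryUtility_s1 (P : Measure Ω) (u : (Ω → ℝ) → ℝ) : Prop where
  add_const : ∀ ξ : Ω → ℝ, BddMeas P ξ → ∀ h : ℝ, u (fun ω => ξ ω + h) = u ξ + h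
  mono : ∀ ξ η : Ω → ℝ, BddMeas P ξ → BddMeas P η → (∀ᵐ ω ∂P, ξ ω ≤ η ω) → u ξ ≤ u η
  map_zero : u (fun _ => 0) = 0

def IsLawDetermined (P : Measure Ω) (u : (Ω → ℝ) → ℝ) : Prop :=
  ∀ ξ η : Ω → ℝ, BddMeas P ξ → BddMeas P η → P.map ξ = P.map η → u ξ = u η

def IsConcaveUtility (P : Measure Ω) (u : (Ω → ℝ) → ℝ) : Prop :=
  ∀ ξ η : Ω → ℝ, BddMeas P ξ → BddMeas P η → ∀ l : ℝ, 0 ≤ l → l ≤ 1 →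
    l * u ξ + (1 - l) * u η ≤ u (fun ω => l * ξ ω + (1 - l) * η ω)

theorem BddMeas.const (P : Measure Ω) (c : ℝ) : BddMeas P (fun _ => c) :=
  ⟨measurable_const, |c|, ae_of_all _ fun _ => le_rfl⟩

theorem BddMeas.ite {A : Set Ω} (hA : MeasurableSet A) (x y : ℝ) :
    BddMeas P (fun ω => if ω ∈ A then x else y) := by
  refine ⟨Measurable.ite hA measurable_const measurable_const, max |x| |y|,
    ae_of_all _ fun ω => ?_⟩
  dsimp only
  split_ifs
  exacts [le_max_left _ _, le_max_right _ _]

theorem hasDyadicLaw_ite [IsProbabilityMeasure P] {A : Set Ω} (hA : MeasurableSet A) (x y : ℝ) :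
    HasDyadicLaw P (fun ω => if ω ∈ A then x else y) x y (P A).toReal := by
  have hPA : ENNReal.ofReal (P A).toReal = P A := ENNReal.ofReal_toReal (measure_ne_top _ _)
  have hPAc : ENNReal.ofReal (1 - (P A).toReal) = P Aᶜ := by
    rw [prob_compl_eq_one_sub hA, ENNReal.ofReal_sub _ ENNReal.toReal_nonneg, hPA,
      ENNReal.ofReal_one]
  ext s hs
  rw [Measure.map_apply (BddMeas.ite (P := P) hA x y).1 hs, Measure.add_apply,
    Measure.smul_apply, Measure.smul_apply, Measure.dirac_apply' _ hs, Measure.dirac_apply' _ hs,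
    hPA, hPAc]
  have hpre : (fun ω => if ω ∈ A then x else y) ⁻¹' s
      = (if x ∈ s then A else ∅) ∪ (if y ∈ s then Aᶜ else ∅) := by
    ext ω
    by_cases hω : ω ∈ A <;> split_ifs <;> simp [*]
  rw [hpre]
  split_ifs with hx hy hy <;> simp [hx, hy, prob_add_prob_compl hA]

-- `essInfR P ξ` is definitionally `essInf ξ P = liminf ξ (ae P)`, so the liminf API applies.
theorem BddMeas.essInfR_le {ξ : Ω → ℝ} (hξ : BddMeas P ξ) {v : ℝ}
    (h : ∀ c, (∀ᵐ ω ∂P, c ≤ ξ ω) → c ≤ v) : essInfR P ξ ≤ v := by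
  obtain ⟨-, C, hC⟩ := hξ
  exact liminf_le_of_le (isBoundedUnder_of_eventually_ge (a := -C)
    (hC.mono fun _ => neg_le_of_abs_le)) h

theorem BddMeas.measure_lt_ne_zero [NeZero P] {ξ : Ω → ℝ} (hξ : BddMeas P ξ) {c : ℝ}
    (hc : essInfR P ξ < c) : P {ω | ξ ω < c} ≠ 0 := by
  obtain ⟨-, C, hC⟩ := hξ
  have hbdd : IsBoundedUnder (· ≤ ·) (ae P) ξ :=
    isBoundedUnder_of_eventually_le (a := C) (hC.mono fun _ => le_of_abs_le)
  exact frequently_ae_iff.1 (frequently_lt_of_liminf_lt hbdd.isCoboundedUnder_flip hc)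

theorem IsConcaveUtility.mul_le_apply_mul {u : (Ω → ℝ) → ℝ} (hconc : IsConcaveUtility P u)
    (h0 : u (fun _ => 0) = 0) {ξ : Ω → ℝ} (hξ : BddMeas P ξ) {l : ℝ} (hl0 : 0 ≤ l) (hl1 : l ≤ 1) :
    l * u ξ ≤ u (fun ω => l * ξ ω) := by
  simpa [h0] using hconc ξ _ hξ (BddMeas.const P 0) l hl0 hl1

theorem IsLawDetermined.apply_ite_neg [IsProbabilityMeasure P] {u : (Ω → ℝ) → ℝ}
    (hlaw : IsLawDetermined P u) {x y : ℝ}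
    (hneg : ∀ α : ℝ, 0 < α → α < 1 → ∃ ξ, BddMeas P ξ ∧ HasDyadicLaw P ξ x y α ∧ u ξ < 0)
    {A : Set Ω} (hA : MeasurableSet A) (hA0 : 0 < P A) (hA1 : P A < 1) :
    u (fun ω => if ω ∈ A then x else y) < 0 := by
  obtain ⟨ξ, hξ, hξlaw, hξneg⟩ := hneg (P A).toReal (ENNReal.toReal_pos hA0.ne' (by finiteness))
    (ENNReal.toReal_lt_of_lt_ofReal (by simpa using hA1))
  rwa [hlaw _ ξ (BddMeas.ite hA x y) hξ ((hasDyadicLaw_ite hA x y).trans hξlaw.symm)]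

namespace IsMonetaryUtility_s1

variable {u : (Ω → ℝ) → ℝ}

theorem apply_const (hu : IsMonetaryUtility_s1 P u) (c : ℝ) : u (fun _ => c) = c := by
  simpa [hu.map_zero] using hu.add_const _ (BddMeas.const P 0) c

theorem apply_ite_mono (hu : IsMonetaryUtility_s1 P u) {A : Set Ω} (hA : MeasurableSet A)
    {x x' y y' : ℝ} (hx : x ≤ x') (hy : y ≤ y') :
    u (fun ω => if ω ∈ A then x else y) ≤ u (fun ω => if ω ∈ A then x' else y') :=
  hu.mono _ _ (BddMeas.ite hA x y) (BddMeas.ite hA x' y') (ae_of_all _ fun ω => by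
    split_ifs
    exacts [hx, hy])

theorem essInfR_le_apply (hu : IsMonetaryUtility_s1 P u) {ξ : Ω → ℝ} (hξ : BddMeas P ξ) :
    essInfR P ξ ≤ u ξ :=
  hξ.essInfR_le fun c hc => hu.apply_const c ▸ hu.mono _ _ (BddMeas.const P c) hξ hc

theorem apply_le_essInfR [NeZero P] (hu : IsMonetaryUtility_s1 P u)
    (hneg : ∀ A : Set Ω, MeasurableSet A → 0 < P A → ∀ x < 0, ∀ y : ℝ,
      u (fun ω => if ω ∈ A then x else y) < 0)
    {ξ : Ω → ℝ} (hξ : BddMeas P ξ) : u ξ ≤ essInfR P ξ := by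
  refine le_of_forall_gt fun c hc => ?_
  obtain ⟨c', hc', hc'c⟩ := exists_between hc
  set A := {ω | ξ ω < c'}
  have hA : MeasurableSet A := measurableSet_lt hξ.1 measurable_const
  have hA0 : 0 < P A := pos_iff_ne_zero.2 (hξ.measure_lt_ne_zero hc')
  obtain ⟨-, C, hC⟩ := id hξ
  have hdom : u ξ ≤ u (fun ω => if ω ∈ A then c' else C) := by
    refine hu.mono _ _ hξ (BddMeas.ite hA _ _) ?_
    filter_upwards [hC] with ω hω
    by_cases h : ω ∈ A
    · simpa [h] using (show ξ ω < c' from h).le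
    · simpa [h] using le_of_abs_le hω
  have hshift : (fun ω => if ω ∈ A then c' else C)
      = fun ω => (if ω ∈ A then c' - c else C - c) + c := by
    funext ω
    split_ifs <;> ring
  rw [hshift, hu.add_const _ (BddMeas.ite hA _ _)] at hdom
  linarith [hneg A hA hA0 (c' - c) (by linarith) (C - c)]

theorem apply_ite_neg [IsProbabilityMeasure P] (hu : IsMonetaryUtility_s1 P u)
    (hconc : IsConcaveUtility P u) (hlaw : IsLawDetermined P u) {a : ℝ} (ha : 0 < a)
    {k : ℕ → ℝ} (hk : Tendsto k atTop (nhds 0))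
    (hyp : ∀ n : ℕ, ∀ α : ℝ, 0 < α → α < 1 →
      ∃ ξ : Ω → ℝ, BddMeas P ξ ∧ HasDyadicLaw P ξ (k n) a α ∧ u ξ < 0)
    {A : Set Ω} (hA : MeasurableSet A) (hA0 : 0 < P A) {x : ℝ} (hx : x < 0) (y : ℝ) :
    u (fun ω => if ω ∈ A then x else y) < 0 := by
  rcases (prob_le_one : P A ≤ 1).lt_or_eq with hA1 | hA1
  · set b := max a y
    have hb : 0 < b := ha.trans_le (le_max_left _ _)
    set μ := a / b
    have hμ0 : 0 < μ := div_pos ha hb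
    obtain ⟨n, hn⟩ : ∃ n, μ * x < k n :=
      (hk.eventually (eventually_gt_nhds (mul_neg_of_pos_of_neg hμ0 hx))).exists
    have hscaled : μ * u (fun ω => if ω ∈ A then x else b) < 0 := calc
      μ * u (fun ω => if ω ∈ A then x else b)
          ≤ u (fun ω => μ * if ω ∈ A then x else b) :=
        hconc.mul_le_apply_mul hu.map_zero (BddMeas.ite hA x b) hμ0.le
          ((div_le_one hb).2 (le_max_left _ _))
      _ = u (fun ω => if ω ∈ A then μ * x else a) := by
        simp only [mul_ite, μ, div_mul_cancel₀ a hb.ne']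
      _ ≤ u (fun ω => if ω ∈ A then k n else a) := hu.apply_ite_mono hA hn.le le_rfl
      _ < 0 := hlaw.apply_ite_neg (hyp n) hA hA0 hA1
    calc u (fun ω => if ω ∈ A then x else y)
        ≤ u (fun ω => if ω ∈ A then x else b) := hu.apply_ite_mono hA le_rfl (le_max_right _ _)
      _ < 0 := neg_of_mul_neg_right hscaled hμ0.le
  · have hAae : ∀ᵐ ω ∂P, ω ∈ A := mem_ae_iff.2 ((prob_compl_eq_zero_iff hA).2 hA1)
    calc u (fun ω => if ω ∈ A then x else y) ≤ u (fun _ => x) :=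
          hu.mono _ _ (BddMeas.ite hA x y) (BddMeas.const P x)
            (hAae.mono fun ω hω => by simp [hω])
      _ = x := hu.apply_const x
      _ < 0 := hx

end IsMonetaryUtility_s1

end

theorem stmt_1_general {Ω : Type} [MeasurableSpace Ω] (P : Measure Ω) [IsProbabilityMeasure P]
    (u : (Ω → ℝ) → ℝ)
    (hTI : ∀ ξ : Ω → ℝ, BddMeas P ξ → ∀ h : ℝ, u (fun ω => ξ ω + h) = u ξ + h)
    (hMono : ∀ ξ η : Ω → ℝ, BddMeas P ξ → BddMeas P η → (∀ᵐ ω ∂P, ξ ω ≤ η ω) → u ξ ≤ u η)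
    (hNorm : u (fun _ => 0) = 0)
    (hLaw : ∀ ξ η : Ω → ℝ, BddMeas P ξ → BddMeas P η → P.map ξ = P.map η → u ξ = u η)
    (hConc : ∀ ξ η : Ω → ℝ, BddMeas P ξ → BddMeas P η → ∀ l : ℝ, 0 ≤ l → l ≤ 1 →
      l * u ξ + (1 - l) * u η ≤ u (fun ω => l * ξ ω + (1 - l) * η ω))
    (a : ℝ) (ha : 0 < a) (k : ℕ → ℝ)
    (hklim : Tendsto k Filter.atTop (nhds 0))
    (hyp : ∀ n : ℕ, ∀ α : ℝ, 0 < α → α < 1 →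
      ∃ ξ : Ω → ℝ, BddMeas P ξ ∧ HasDyadicLaw P ξ (k n) a α ∧ u ξ < 0) :
    ∀ ξ : Ω → ℝ, BddMeas P ξ → u ξ = essInfR P ξ := by
  intro ξ hξ
  have hu : IsMonetaryUtility_s1 P u := ⟨hTI, hMono, hNorm⟩
  refine le_antisymm (hu.apply_le_essInfR (fun _ hA hA0 _ hx y => ?_) hξ) (hu.essInfR_le_apply hξ)
  exact hu.apply_ite_neg hConc hLaw ha hklim hyp hA hA0 hx y

theorem stmt_1 {Ω : Type} [MeasurableSpace Ω] (P : Measure Ω) [IsProbabilityMeasure P]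
    (u : (Ω → ℝ) → ℝ)
    (hAtomless : ∀ A : Set Ω, MeasurableSet A → 0 < P A →
      ∃ B : Set Ω, B ⊆ A ∧ MeasurableSet B ∧ 0 < P B ∧ P B < P A)
    (hTI : ∀ ξ : Ω → ℝ, BddMeas P ξ → ∀ h : ℝ, u (fun ω => ξ ω + h) = u ξ + h)
    (hMono : ∀ ξ η : Ω → ℝ, BddMeas P ξ → BddMeas P η → (∀ᵐ ω ∂P, ξ ω ≤ η ω) → u ξ ≤ u η)
    (hNorm : u (fun _ => 0) = 0)
    (hLaw : ∀ ξ η : Ω → ℝ, BddMeas P ξ → BddMeas P η → P.map ξ = P.map η → u ξ = u η)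
    (hConc : ∀ ξ η : Ω → ℝ, BddMeas P ξ → BddMeas P η → ∀ l : ℝ, 0 ≤ l → l ≤ 1 →
      l * u ξ + (1 - l) * u η ≤ u (fun ω => l * ξ ω + (1 - l) * η ω))
    (hFatou : ∀ (ξs : ℕ → Ω → ℝ) (ξ : Ω → ℝ), (∀ n, BddMeas P (ξs n)) → BddMeas P ξ →
      (∃ C : ℝ, ∀ n, ∀ᵐ ω ∂P, |ξs n ω| ≤ C) →
      TendstoInMeasure P ξs Filter.atTop ξ →
      Filter.limsup (fun n => u (ξs n)) Filter.atTop ≤ u ξ)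
    (a : ℝ) (ha : 0 < a) (k : ℕ → ℝ) (hkneg : ∀ n, k n < 0) (hkmono : Monotone k)
    (hklim : Tendsto k Filter.atTop (nhds 0))
    (hyp : ∀ n : ℕ, ∀ α : ℝ, 0 < α → α < 1 →
      ∃ ξ : Ω → ℝ, BddMeas P ξ ∧ HasDyadicLaw P ξ (k n) a α ∧ u ξ < 0) :
    ∀ ξ : Ω → ℝ, BddMeas P ξ → u ξ = essInfR P ξ :=
  stmt_1_general P u hTI hMono hNorm hLaw hConc a ha k hklim hyp
end

section
/- Let u be a concave, law-determined monetary utility function on L^∞ of an atomless probability space, satisfying the Fatou property. Suppose there exist a > 0, a sequence k_n → −∞ and α_n ∈ (0,1) such that u(α_n δ_{k_n} + (1−α_n) δ_a) ≥ 0 for every n. Then u has the weak compactness property: for every m ≥ 0 the family of densities {dℚ/dℙ : ℚ ≪ ℙ a probability measure with c(ℚ) ≤ m} is uniformly integrable in L^1(ℙ). -/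
/-!
Given `m` and `ε`, choose `n` with `k n < a` and `(a + m) / (a - k n) < ε`, and take `δ = α n`.
By Sierpiński's theorem for atomless measures, a set `A` with `P A < α n` lies inside a set `B`
with `P B = α n` exactly, so `k n` on `B` and `a` off `B` has the two-point law of the hypothesis
and, by law invariance, nonnegative utility. Testing `c(Q) ≤ m` against it gives
`(a - k n) · Q B ≤ a + m`, hence `Q A ≤ Q B < ε`.
-/

open MeasureTheory Filter Set

/-- `c(Q) ≤ m` for the penalty function `c(Q) = sup_{ξ ∈ L^∞} (u(ξ) - E_Q[ξ])`. -/
def PenaltyLE {Ω : Type} [MeasurableSpace Ω] (P : Measure Ω) (u : (Ω → ℝ) → ℝ)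
    (Q : Measure Ω) (m : ℝ) : Prop :=
  ∀ ξ : Ω → ℝ, BddMeas P ξ → u ξ - ∫ ω, ξ ω ∂Q ≤ m

/-- The weak compactness property: for every `m ≥ 0`, the family of densities
`{dQ/dP : Q ≪ P a probability measure with c(Q) ≤ m}` is uniformly integrable in `L¹(P)`. -/
def WCProperty {Ω : Type} [MeasurableSpace Ω] (P : Measure Ω) (u : (Ω → ℝ) → ℝ) : Prop :=
  ∀ m : ℝ, 0 ≤ m → ∀ ε : ℝ, 0 < ε → ∃ δ : ℝ, 0 < δ ∧
    ∀ Q : Measure Ω, IsProbabilityMeasure Q → Q ≪ P → PenaltyLE P u Q m →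
      ∀ A : Set Ω, MeasurableSet A → P A < ENNReal.ofReal δ →
        ∫ ω in A, (Q.rnDeriv P ω).toReal ∂P < ε

open scoped ENNReal Topology

section Atomless

variable {Ω : Type*} [MeasurableSpace Ω] {P : Measure Ω}

def IsAtomless (P : Measure Ω) : Prop :=
  ∀ A : Set Ω, MeasurableSet A → 0 < P A →
    ∃ B : Set Ω, B ⊆ A ∧ MeasurableSet B ∧ 0 < P B ∧ P B < P A

variable [IsFiniteMeasure P]

lemma IsAtomless.exists_subset_measure_pos_le_half (hP : IsAtomless P) {A : Set Ω}
    (hA : MeasurableSet A) (hA₀ : 0 < P A) :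
    ∃ B ⊆ A, MeasurableSet B ∧ 0 < P B ∧ P B ≤ P A / 2 := by
  obtain ⟨B, hBA, hB, hB₀, hBA'⟩ := hP A hA hA₀
  rcases le_or_gt (P B) (P A / 2) with h | h
  · exact ⟨B, hBA, hB, hB₀, h⟩
  have hdiff : P (A \ B) = P A - P B :=
    measure_sdiff hBA hB.nullMeasurableSet (measure_ne_top P B)
  refine ⟨A \ B, sdiff_subset, hA.diff hB, hdiff ▸ tsub_pos_of_lt hBA', ?_⟩
  rw [hdiff, tsub_le_iff_right]
  calc P A = P A / 2 + P A / 2 := (ENNReal.add_halves _).symm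
    _ ≤ P A / 2 + P B := by gcongr

lemma IsAtomless.exists_subset_measure_pos_le (hP : IsAtomless P) {A : Set Ω}
    (hA : MeasurableSet A) (hA₀ : 0 < P A) {ε : ℝ≥0∞} (hε : ε ≠ 0) :
    ∃ B ⊆ A, MeasurableSet B ∧ 0 < P B ∧ P B ≤ ε := by
  have halving : ∀ n : ℕ, ∃ B ⊆ A, MeasurableSet B ∧ 0 < P B ∧ P B ≤ P A * 2⁻¹ ^ n := by
    intro n
    induction n with
    | zero => exact ⟨A, subset_rfl, hA, hA₀, by simp⟩
    | succ n ih =>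
      obtain ⟨B, hBA, hB, hB₀, hBle⟩ := ih
      obtain ⟨C, hCB, hC, hC₀, hCle⟩ := hP.exists_subset_measure_pos_le_half hB hB₀
      refine ⟨C, hCB.trans hBA, hC, hC₀, ?_⟩
      calc P C ≤ P B / 2 := hCle
        _ ≤ P A * 2⁻¹ ^ n / 2 := by gcongr
        _ = P A * 2⁻¹ ^ (n + 1) := by
          rw [pow_succ, ← mul_assoc, ENNReal.div_eq_inv_mul, mul_comm]
  obtain ⟨n, hn⟩ := ENNReal.exists_inv_two_pow_lt (ENNReal.div_pos hε (measure_ne_top P A)).ne'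
  obtain ⟨B, hBA, hB, hB₀, hBle⟩ := halving n
  refine ⟨B, hBA, hB, hB₀, hBle.trans ?_⟩
  calc P A * 2⁻¹ ^ n ≤ P A * (ε / P A) := by gcongr
    _ = ε := ENNReal.mul_div_cancel hA₀.ne' (measure_ne_top P A)

lemma exists_mem_forall_measure_le_add {S : Set (Set Ω)} (hS : S.Nonempty) {ε : ℝ≥0∞}
    (hε : ε ≠ 0) : ∃ C ∈ S, ∀ C' ∈ S, P C' ≤ P C + ε := by
  set t := ⨆ C ∈ S, P C
  have ht : ∀ C ∈ S, P C ≤ t := fun C hC => le_iSup₂ (f := fun C (_ : C ∈ S) => P C) C hC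
  rcases le_or_gt t ε with h | h
  · obtain ⟨C, hC⟩ := hS
    exact ⟨C, hC, fun C' hC' => (ht C' hC').trans (h.trans le_add_self)⟩
  have ht_top : t ≠ ∞ :=
    ne_top_of_le_ne_top (measure_ne_top P univ)
      (iSup₂_le fun C _ => measure_mono (subset_univ C))
  obtain ⟨C, hC, hlt⟩ := lt_biSup_iff.mp (ENNReal.sub_lt_self ht_top (pos_of_gt h).ne' hε)
  exact ⟨C, hC, fun C' hC' => (ht C' hC').trans (tsub_le_iff_right.mp hlt.le)⟩

lemma exists_monotone_forall_measure_le_add_inv {S : Set (Set Ω)} {s₀ : Set Ω} (h₀ : s₀ ∈ S) :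
    ∃ s : ℕ → Set Ω, Monotone s ∧ (∀ n, s n ∈ S) ∧
      ∀ n, ∀ C ∈ S, s n ⊆ C → P C ≤ P (s (n + 1)) + (n : ℝ≥0∞)⁻¹ := by
  have step : ∀ (n : ℕ) (s : Set Ω), ∃ C, s ∈ S →
      C ∈ S ∧ s ⊆ C ∧ ∀ C' ∈ S, s ⊆ C' → P C' ≤ P C + (n : ℝ≥0∞)⁻¹ := by
    intro n s
    by_cases hs : s ∈ S
    · obtain ⟨C, ⟨hC, hsC⟩, hmax⟩ := exists_mem_forall_measure_le_add (P := P)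
        (S := {C ∈ S | s ⊆ C}) ⟨s, hs, subset_rfl⟩
        (ENNReal.inv_ne_zero.mpr (ENNReal.natCast_ne_top n))
      exact ⟨C, fun _ => ⟨hC, hsC, fun C' h₁ h₂ => hmax C' ⟨h₁, h₂⟩⟩⟩
    · exact ⟨s, fun h => absurd h hs⟩
  choose F hF using step
  let s : ℕ → Set Ω := fun n => Nat.rec s₀ F n
  have hs : ∀ n, s n ∈ S := fun n => Nat.rec h₀ (fun n h => (hF n (s n) h).1) n
  exact ⟨s, monotone_nat_of_le_succ fun n => (hF n _ (hs n)).2.1, hs,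
    fun n => (hF n _ (hs n)).2.2⟩

theorem IsAtomless.exists_subset_measure_eq (hP : IsAtomless P) {A : Set Ω}
    (hA : MeasurableSet A) {r : ℝ≥0∞} (hr : r ≤ P A) :
    ∃ B ⊆ A, MeasurableSet B ∧ P B = r := by
  set S : Set (Set Ω) := {s | s ⊆ A ∧ MeasurableSet s ∧ P s ≤ r}
  obtain ⟨s, hs_mono, hs, hs_max⟩ := exists_monotone_forall_measure_le_add_inv (P := P) (S := S)
    ⟨empty_subset A, .empty, by simp⟩
  set B := ⋃ n, s n
  have hsB : ∀ n, s n ⊆ B := subset_iUnion s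
  have hB : MeasurableSet B := .iUnion fun n => (hs n).2.1
  have hPB : Tendsto (fun n => P (s n)) atTop (𝓝 (P B)) := tendsto_measure_iUnion_atTop hs_mono
  have hBr : P B ≤ r := le_of_tendsto' hPB fun n => (hs n).2.2
  have hBA : B ⊆ A := iUnion_subset fun n => (hs n).1
  refine ⟨B, hBA, hB, le_antisymm hBr (not_lt.mp fun hlt => ?_)⟩
  have hAB : 0 < P (A \ B) := by
    rw [measure_sdiff hBA hB.nullMeasurableSet (measure_ne_top P B)]
    exact tsub_pos_of_lt (hlt.trans_le hr)
  obtain ⟨D, hDAB, hD, hD₀, hDle⟩ :=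
    hP.exists_subset_measure_pos_le (hA.diff hB) hAB (tsub_pos_of_lt hlt).ne'
  -- `s n ∪ D` is admissible, so near-maximality of `s (n + 1)` bounds `P (s n) + P D`.
  have hgrow : ∀ n, P (s n) + P D ≤ P B + (n : ℝ≥0∞)⁻¹ := by
    intro n
    have hdisj : Disjoint (s n) D :=
      disjoint_left.mpr fun x hx hxD => (hDAB hxD).2 (hsB n hx)
    have hunion : P (s n ∪ D) = P (s n) + P D := measure_union hdisj hD
    have hadm : s n ∪ D ∈ S := by
      refine ⟨union_subset (hs n).1 fun x hx => (hDAB hx).1, (hs n).2.1.union hD, ?_⟩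
      calc P (s n ∪ D) = P (s n) + P D := hunion
        _ ≤ P B + (r - P B) := add_le_add (measure_mono (hsB n)) hDle
        _ = r := add_tsub_cancel_of_le hlt.le
    calc P (s n) + P D = P (s n ∪ D) := hunion.symm
      _ ≤ P (s (n + 1)) + (n : ℝ≥0∞)⁻¹ := hs_max n _ hadm subset_union_left
      _ ≤ P B + (n : ℝ≥0∞)⁻¹ := by gcongr; exact hsB _
  have hlim : P B + P D ≤ P B + 0 :=
    le_of_tendsto_of_tendsto' (hPB.add tendsto_const_nhds)
      (tendsto_const_nhds.add ENNReal.tendsto_inv_nat_nhds_zero) hgrow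
  exact hD₀.ne' (nonpos_iff_eq_zero.mp
    (ENNReal.le_of_add_le_add_left (measure_ne_top P B) hlim))

lemma IsAtomless.exists_superset_measure_eq (hP : IsAtomless P) {A : Set Ω}
    (hA : MeasurableSet A) {r : ℝ≥0∞} (hAr : P A ≤ r) (hr : r ≤ P univ) :
    ∃ B, A ⊆ B ∧ MeasurableSet B ∧ P B = r := by
  obtain ⟨D, hDA, hD, hPD⟩ := hP.exists_subset_measure_eq hA.compl (r := r - P A)
    (by rw [measure_compl hA (measure_ne_top P A)]; exact tsub_le_tsub_right hr _)
  refine ⟨A ∪ D, subset_union_left, hA.union hD, ?_⟩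
  rw [measure_union (subset_compl_iff_disjoint_left.mp hDA) hD, hPD, add_tsub_cancel_of_le hAr]

end Atomless

section TwoPoint

variable {Ω : Type*} [MeasurableSpace Ω] {B : Set Ω} [DecidablePred (· ∈ B)]

lemma map_ite_mem (μ : Measure Ω) (hB : MeasurableSet B) (x y : ℝ) :
    μ.map (fun ω => if ω ∈ B then x else y) =
      μ B • Measure.dirac x + μ Bᶜ • Measure.dirac y := by
  have hm : Measurable fun ω => if ω ∈ B then x else y :=
    Measurable.ite hB measurable_const measurable_const
  ext s hs
  rw [Measure.map_apply hm hs]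
  change μ (B.piecewise (fun _ => x) (fun _ => y) ⁻¹' s) = _
  by_cases hx : x ∈ s <;> by_cases hy : y ∈ s <;>
    simp [piecewise_preimage, Set.ite, hx, hy, Measure.dirac_apply' _ hs, ← compl_eq_univ_sdiff,
      measure_add_measure_compl hB]

lemma integral_ite_mem (μ : Measure Ω) [IsProbabilityMeasure μ] (hB : MeasurableSet B)
    (x y : ℝ) : ∫ ω, (if ω ∈ B then x else y) ∂μ = μ.real B * x + (1 - μ.real B) * y := by
  change ∫ ω, B.piecewise (fun _ => x) (fun _ => y) ω ∂μ = _
  rw [integral_piecewise hB integrableOn_const integrableOn_const, setIntegral_const,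
    setIntegral_const, probReal_compl_eq_one_sub hB, smul_eq_mul, smul_eq_mul]

end TwoPoint

section TwoPointLaw

variable {Ω : Type} [MeasurableSpace Ω] {P : Measure Ω} {B : Set Ω} [DecidablePred (· ∈ B)]

lemma bddMeas_ite_mem (hB : MeasurableSet B) (x y : ℝ) :
    BddMeas P fun ω => if ω ∈ B then x else y :=
  ⟨Measurable.ite hB measurable_const measurable_const, max |x| |y|,
    ae_of_all _ fun ω => by dsimp only; split_ifs <;> simp⟩

lemma hasDyadicLaw_ite_mem [IsProbabilityMeasure P] (hB : MeasurableSet B) (x y : ℝ) {l : ℝ}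
    (hl : 0 ≤ l) (hPB : P B = ENNReal.ofReal l) :
    HasDyadicLaw P (fun ω => if ω ∈ B then x else y) x y l := by
  rw [HasDyadicLaw, map_ite_mem P hB, prob_compl_eq_one_sub hB, hPB, ENNReal.ofReal_sub 1 hl,
    ENNReal.ofReal_one]

lemma PenaltyLE.measureReal_le {u : (Ω → ℝ) → ℝ} {Q : Measure Ω} [IsProbabilityMeasure Q]
    {m : ℝ} (hQ : PenaltyLE P u Q m) (hB : MeasurableSet B) {k a : ℝ} (hka : k < a)
    (hu : 0 ≤ u fun ω => if ω ∈ B then k else a) :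
    Q.real B ≤ (a + m) / (a - k) := by
  have h := hQ _ (bddMeas_ite_mem hB k a)
  rw [integral_ite_mem Q hB] at h
  rw [le_div_iff₀ (sub_pos.mpr hka)]
  linarith

end TwoPointLaw

theorem stmt_2_general {Ω : Type} [MeasurableSpace Ω] (P : Measure Ω) [IsProbabilityMeasure P]
    (u : (Ω → ℝ) → ℝ)
    (hAtomless : ∀ A : Set Ω, MeasurableSet A → 0 < P A →
      ∃ B : Set Ω, B ⊆ A ∧ MeasurableSet B ∧ 0 < P B ∧ P B < P A)
    (hLaw : ∀ ξ η : Ω → ℝ, BddMeas P ξ → BddMeas P η → P.map ξ = P.map η → u ξ = u η)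
    (a : ℝ) (k : ℕ → ℝ) (hk : Tendsto k Filter.atTop Filter.atBot)
    (α : ℕ → ℝ) (hα : ∀ n, 0 < α n ∧ α n < 1)
    (hyp : ∀ n : ℕ, ∃ ξ : Ω → ℝ, BddMeas P ξ ∧ HasDyadicLaw P ξ (k n) a (α n) ∧ 0 ≤ u ξ) :
    WCProperty P u := by
  classical
  intro m _ ε hε
  have hbound : Tendsto (fun n => (a + m) / (a - k n)) atTop (𝓝 0) :=
    tendsto_const_nhds.div_atTop
      (tendsto_atTop_add_const_left _ a (tendsto_neg_atBot_atTop.comp hk))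
  obtain ⟨n, hka, hsmall⟩ :=
    ((hk.eventually (eventually_lt_atBot a)).and (hbound.eventually (gt_mem_nhds hε))).exists
  refine ⟨α n, (hα n).1, fun Q _ hQP hQ A hA hPA => ?_⟩
  obtain ⟨B, hAB, hB, hPB⟩ := IsAtomless.exists_superset_measure_eq hAtomless hA hPA.le
    (by rw [measure_univ, ← ENNReal.ofReal_one]; exact ENNReal.ofReal_le_ofReal (hα n).2.le)
  obtain ⟨ξ, hξ, hξ_law, hξ_u⟩ := hyp n
  have hu : 0 ≤ u fun ω => if ω ∈ B then k n else a := by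
    rwa [hLaw _ ξ (bddMeas_ite_mem hB _ _) hξ
      ((hasDyadicLaw_ite_mem hB _ _ (hα n).1.le hPB).trans hξ_law.symm)]
  rw [Measure.setIntegral_toReal_rnDeriv hQP A]
  calc (Q A).toReal ≤ Q.real B := measureReal_mono hAB
    _ ≤ (a + m) / (a - k n) := hQ.measureReal_le hB hka hu
    _ < ε := hsmall

theorem stmt_2 {Ω : Type} [MeasurableSpace Ω] (P : Measure Ω) [IsProbabilityMeasure P]
    (u : (Ω → ℝ) → ℝ)
    (hAtomless : ∀ A : Set Ω, MeasurableSet A → 0 < P A →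
      ∃ B : Set Ω, B ⊆ A ∧ MeasurableSet B ∧ 0 < P B ∧ P B < P A)
    (hTI : ∀ ξ : Ω → ℝ, BddMeas P ξ → ∀ h : ℝ, u (fun ω => ξ ω + h) = u ξ + h)
    (hMono : ∀ ξ η : Ω → ℝ, BddMeas P ξ → BddMeas P η → (∀ᵐ ω ∂P, ξ ω ≤ η ω) → u ξ ≤ u η)
    (hNorm : u (fun _ => 0) = 0)
    (hLaw : ∀ ξ η : Ω → ℝ, BddMeas P ξ → BddMeas P η → P.map ξ = P.map η → u ξ = u η)
    (hConc : ∀ ξ η : Ω → ℝ, BddMeas P ξ → BddMeas P η → ∀ l : ℝ, 0 ≤ l → l ≤ 1 →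
      l * u ξ + (1 - l) * u η ≤ u (fun ω => l * ξ ω + (1 - l) * η ω))
    (hFatou : ∀ (ξs : ℕ → Ω → ℝ) (ξ : Ω → ℝ), (∀ n, BddMeas P (ξs n)) → BddMeas P ξ →
      (∃ C : ℝ, ∀ n, ∀ᵐ ω ∂P, |ξs n ω| ≤ C) →
      TendstoInMeasure P ξs Filter.atTop ξ →
      Filter.limsup (fun n => u (ξs n)) Filter.atTop ≤ u ξ)
    (a : ℝ) (ha : 0 < a) (k : ℕ → ℝ) (hk : Tendsto k Filter.atTop Filter.atBot)
    (α : ℕ → ℝ) (hα : ∀ n, 0 < α n ∧ α n < 1)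
    (hyp : ∀ n : ℕ, ∃ ξ : Ω → ℝ, BddMeas P ξ ∧ HasDyadicLaw P ξ (k n) a (α n) ∧ 0 ≤ u ξ) :
    WCProperty P u :=
  stmt_2_general P u hAtomless hLaw a k hk α hα hyp
end
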